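/- arXiv:1109.0417 — 6 statements merged into one kernel-verified Lean document; each statement's English description precedes it below -/
import Mathlib

section
/- For every natural number n ≥ 1, the Bell number satisfies B_n = B̃_n + B̃_{n+1}, where B̃_m is the number of singleton-free set partitions of an m-element set. -/
/-- A set partition of `Fin n`, modelled as a finite set of blocks. -/
def IsSetPartition {n : ℕ} (P : Finset (Finset (Fin n))) : Prop :=
  (∀ b ∈ P, b.Nonempty) ∧ (∀ b ∈ P, ∀ c ∈ P, b ≠ c → Disjoint b c) ∧
    P.sup id = Finset.univ

/-- The `n`-th Bell number: the number of set partitions of an `n`-element set. -/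
noncomputable def bell (n : ℕ) : ℕ :=
  Set.ncard {P : Finset (Finset (Fin n)) | IsSetPartition P}

/-- The number of singleton-free set partitions of an `n`-element set. -/
noncomputable def bellT (n : ℕ) : ℕ :=
  Set.ncard {P : Finset (Finset (Fin n)) | IsSetPartition P ∧ ∀ b ∈ P, 2 ≤ b.card}

/-!
The partitions of `[n]` without singletons are counted by `B̃ₙ`. Those with at least one
singleton correspond bijectively to the singleton-free partitions of `[n + 1]`: merge all the
singletons of `[n]` together with the new point `n + 1` into one block (of size at least 2).
Conversely, remove `n + 1` from its block and split what is left into singletons.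
-/

open Finset

lemma Finset.sup_id_eq_univ_iff {α : Type*} [Fintype α] [DecidableEq α]
    {P : Finset (Finset α)} : P.sup id = univ ↔ ∀ x, ∃ b ∈ P, x ∈ b := by
  simp [eq_univ_iff_forall, mem_sup]

namespace IsSetPartition

variable {n : ℕ} {P : Finset (Finset (Fin n))} {b c : Finset (Fin n)} {x : Fin n}

lemma of_pairwiseDisjoint (hne : ∀ b ∈ P, b.Nonempty)
    (hdisj : (P : Set (Finset (Fin n))).PairwiseDisjoint id) (hcover : ∀ x, ∃ b ∈ P, x ∈ b) :
    IsSetPartition P :=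
  ⟨hne, hdisj, sup_id_eq_univ_iff.2 hcover⟩

lemma exists_mem (hP : IsSetPartition P) (x : Fin n) : ∃ b ∈ P, x ∈ b :=
  sup_id_eq_univ_iff.1 hP.2.2 x

lemma eq_of_mem_of_mem (hP : IsSetPartition P) (hb : b ∈ P) (hc : c ∈ P) (hxb : x ∈ b)
    (hxc : x ∈ c) : b = c :=
  by_contra fun hbc ↦ disjoint_left.1 (hP.2.1 b hb c hc hbc) hxb hxc

lemma notMem_of_mem_erase (hP : IsSetPartition P) (hb : b ∈ P) (hx : x ∈ b)
    (hc : c ∈ P.erase b) : x ∉ c :=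
  fun hxc ↦ ne_of_mem_erase hc (hP.eq_of_mem_of_mem (mem_of_mem_erase hc) hb hxc hx)

lemma filter_mem_eq_singleton (hP : IsSetPartition P) (hb : b ∈ P) (hx : x ∈ b) :
    P.filter (x ∈ ·) = {b} := by
  ext c
  simp only [mem_filter, mem_singleton]
  exact ⟨fun ⟨hc, hxc⟩ ↦ hP.eq_of_mem_of_mem hc hb hxc hx, by rintro rfl; exact ⟨hb, hx⟩⟩

lemma filter_notMem_eq_erase (hP : IsSetPartition P) (hb : b ∈ P) (hx : x ∈ b) :
    P.filter (x ∉ ·) = P.erase b := by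
  rw [filter_not, hP.filter_mem_eq_singleton hb hx, sdiff_singleton_eq_erase]

end IsSetPartition

section Singletons

variable {n : ℕ} {P : Finset (Finset (Fin n))}

def singletonPoints (P : Finset (Finset (Fin n))) : Finset (Fin n) :=
  univ.filter fun x ↦ {x} ∈ P

@[simp] lemma mem_singletonPoints {x : Fin n} : x ∈ singletonPoints P ↔ {x} ∈ P := by
  simp [singletonPoints]

lemma IsSetPartition.image_singleton_union_filter (hP : IsSetPartition P) :
    (singletonPoints P).image singleton ∪ P.filter (2 ≤ ·.card) = P := by
  ext b
  simp only [mem_union, mem_image, mem_singletonPoints, mem_filter]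
  constructor
  · rintro (⟨x, hx, rfl⟩ | ⟨hb, -⟩) <;> assumption
  · intro hb
    obtain ⟨x, hx⟩ := hP.1 b hb
    rcases eq_singleton_or_nontrivial hx with rfl | hnt
    · exact Or.inl ⟨x, hb, rfl⟩
    · exact Or.inr ⟨hb, one_lt_card_iff_nontrivial.2 hnt⟩

lemma IsSetPartition.singletonPoints_nonempty_iff (hP : IsSetPartition P) :
    (singletonPoints P).Nonempty ↔ ¬ ∀ b ∈ P, 2 ≤ b.card := by
  push Not
  constructor
  · rintro ⟨x, hx⟩
    exact ⟨{x}, mem_singletonPoints.1 hx, by simp⟩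
  · rintro ⟨b, hb, hcard⟩
    have hb1 : b.card = 1 := by have := (hP.1 b hb).card_pos; omega
    obtain ⟨x, rfl⟩ := card_eq_one.1 hb1
    exact ⟨x, mem_singletonPoints.2 hb⟩

end Singletons

section CastSucc

variable {n : ℕ}

def castSuccPreimage (c : Finset (Fin (n + 1))) : Finset (Fin n) :=
  univ.filter fun x ↦ x.castSucc ∈ c

@[simp] lemma mem_castSuccPreimage {c : Finset (Fin (n + 1))} {x : Fin n} :
    x ∈ castSuccPreimage c ↔ x.castSucc ∈ c := by
  simp [castSuccPreimage]

@[simp] lemma castSuccPreimage_map (b : Finset (Fin n)) :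
    castSuccPreimage (b.map Fin.castSuccEmb) = b := by
  ext; simp

@[simp] lemma castSuccPreimage_insert_last (c : Finset (Fin (n + 1))) :
    castSuccPreimage (insert (Fin.last n) c) = castSuccPreimage c := by
  ext; simp [Fin.castSucc_ne_last]

lemma map_castSuccPreimage (c : Finset (Fin (n + 1))) :
    (castSuccPreimage c).map Fin.castSuccEmb = c.erase (Fin.last n) := by
  ext y
  induction y using Fin.lastCases <;> simp [Fin.castSucc_ne_last]

lemma card_castSuccPreimage (c : Finset (Fin (n + 1))) :
    (castSuccPreimage c).card = (c.erase (Fin.last n)).card := by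
  rw [← map_castSuccPreimage, card_map]

lemma disjoint_castSuccPreimage {c d : Finset (Fin (n + 1))} (h : Disjoint c d) :
    Disjoint (castSuccPreimage c) (castSuccPreimage d) :=
  disjoint_left.2 fun _ hc hd ↦
    disjoint_left.1 h (mem_castSuccPreimage.1 hc) (mem_castSuccPreimage.1 hd)

lemma last_notMem_map_castSuccEmb (b : Finset (Fin n)) :
    Fin.last n ∉ b.map Fin.castSuccEmb := by
  simp [Fin.castSucc_ne_last]

end CastSucc

section MergeSingletons

variable {n : ℕ} {P : Finset (Finset (Fin n))}

def mergeSingletons (P : Finset (Finset (Fin n))) : Finset (Finset (Fin (n + 1))) :=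
  insert (insert (Fin.last n) ((singletonPoints P).map Fin.castSuccEmb))
    ((P.filter (2 ≤ ·.card)).image (map Fin.castSuccEmb))

lemma isSetPartition_mergeSingletons (hP : IsSetPartition P) :
    IsSetPartition (mergeSingletons P) := by
  refine .of_pairwiseDisjoint ?_ ?_ fun y ↦ ?_
  · simp only [mergeSingletons, forall_mem_insert, forall_mem_image, mem_filter]
    exact ⟨insert_nonempty _ _, fun b hb ↦ (hP.1 b hb.1).map⟩
  · have hbig : ∀ b ∈ P.filter (2 ≤ ·.card), ∀ x ∈ singletonPoints P, x ∉ b := by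
      intro b hb x hx hxb
      rw [mem_filter, ← hP.eq_of_mem_of_mem (mem_singletonPoints.1 hx) hb.1
        (mem_singleton_self x) hxb] at hb
      simp at hb
    rw [mergeSingletons, coe_insert, coe_image]
    refine Set.PairwiseDisjoint.insert ?_ ?_
    · rintro _ ⟨b, hb, rfl⟩ _ ⟨c, hc, rfl⟩ hne
      exact (disjoint_map _).2 <|
        hP.2.1 b (mem_filter.1 hb).1 c (mem_filter.1 hc).1 (ne_of_apply_ne _ hne)
    · rintro _ ⟨b, hb, rfl⟩ -
      rw [id, id, disjoint_insert_left, disjoint_map, disjoint_left]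
      exact ⟨last_notMem_map_castSuccEmb b, hbig b hb⟩
  · induction y using Fin.lastCases with
    | last => exact ⟨_, mem_insert_self _ _, mem_insert_self _ _⟩
    | cast x =>
      obtain ⟨b, hb, hxb⟩ := hP.exists_mem x
      rcases eq_singleton_or_nontrivial hxb with rfl | hnt
      · exact ⟨_, mem_insert_self _ _, by simpa using hb⟩
      · exact ⟨b.map Fin.castSuccEmb, mem_insert_of_mem (mem_image_of_mem _
          (mem_filter.2 ⟨hb, one_lt_card_iff_nontrivial.2 hnt⟩)), by simpa using hxb⟩

lemma two_le_card_of_mem_mergeSingletons (hs : (singletonPoints P).Nonempty) :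
    ∀ b ∈ mergeSingletons P, 2 ≤ b.card := by
  simp only [mergeSingletons, forall_mem_insert, forall_mem_image, mem_filter, card_map]
  refine ⟨?_, fun b hb ↦ hb.2⟩
  rw [card_insert_of_notMem (last_notMem_map_castSuccEmb _), card_map]
  have := hs.card_pos
  omega

end MergeSingletons

section SplitLastBlock

variable {n : ℕ} {Q : Finset (Finset (Fin (n + 1)))} {B : Finset (Fin (n + 1))}

/- The block of `Fin.last n` is written as `(Q.filter (Fin.last n ∈ ·)).sup id` to avoid choice. -/
def splitLastBlock (Q : Finset (Finset (Fin (n + 1)))) : Finset (Finset (Fin n)) :=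
  (castSuccPreimage ((Q.filter (Fin.last n ∈ ·)).sup id)).image singleton ∪
    (Q.filter (Fin.last n ∉ ·)).image castSuccPreimage

lemma IsSetPartition.splitLastBlock_eq (hQ : IsSetPartition Q) (hB : B ∈ Q)
    (hlast : Fin.last n ∈ B) :
    splitLastBlock Q =
      (castSuccPreimage B).image singleton ∪ (Q.erase B).image castSuccPreimage := by
  rw [splitLastBlock, hQ.filter_mem_eq_singleton hB hlast, hQ.filter_notMem_eq_erase hB hlast,
    sup_singleton, id]

lemma isSetPartition_splitLastBlock (hQ : IsSetPartition Q) :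
    IsSetPartition (splitLastBlock Q) := by
  obtain ⟨B, hB, hlast⟩ := hQ.exists_mem (Fin.last n)
  rw [hQ.splitLastBlock_eq hB hlast]
  refine .of_pairwiseDisjoint ?_ ?_ fun x ↦ ?_
  · simp only [mem_union, mem_image]
    rintro _ (⟨x, -, rfl⟩ | ⟨c, hc, rfl⟩)
    · exact singleton_nonempty x
    · obtain ⟨y, hy⟩ := hQ.1 c (mem_of_mem_erase hc)
      induction y using Fin.lastCases with
      | last => exact absurd hy (hQ.notMem_of_mem_erase hB hlast hc)
      | cast x => exact ⟨x, mem_castSuccPreimage.2 hy⟩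
  · rw [coe_union, coe_image, coe_image]
    refine .union ?_ ?_ ?_
    · rintro _ ⟨x, -, rfl⟩ _ ⟨y, -, rfl⟩ hne
      exact disjoint_singleton.2 fun h ↦ hne (h ▸ rfl)
    · rintro _ ⟨c, hc, rfl⟩ _ ⟨d, hd, rfl⟩ hne
      exact disjoint_castSuccPreimage <|
        hQ.2.1 c (mem_of_mem_erase hc) d (mem_of_mem_erase hd) (ne_of_apply_ne _ hne)
    · rintro _ ⟨x, hx, rfl⟩ _ ⟨c, hc, rfl⟩ -
      refine disjoint_singleton_left.2 fun hxc ↦ ne_of_mem_erase hc ?_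
      exact hQ.eq_of_mem_of_mem (mem_of_mem_erase hc) hB (mem_castSuccPreimage.1 hxc)
        (mem_castSuccPreimage.1 hx)
  · obtain ⟨c, hc, hxc⟩ := hQ.exists_mem x.castSucc
    by_cases hcB : c = B
    · exact ⟨{x}, mem_union_left _ (mem_image_of_mem _ (by rwa [← hcB, mem_castSuccPreimage])),
        mem_singleton_self x⟩
    · exact ⟨castSuccPreimage c, mem_union_right _ (mem_image_of_mem _ (mem_erase.2 ⟨hcB, hc⟩)),
        mem_castSuccPreimage.2 hxc⟩

lemma IsSetPartition.two_le_card_castSuccPreimage (hQ : IsSetPartition Q)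
    (hQ2 : ∀ c ∈ Q, 2 ≤ c.card) (hB : B ∈ Q) (hlast : Fin.last n ∈ B)
    {c : Finset (Fin (n + 1))} (hc : c ∈ Q.erase B) : 2 ≤ (castSuccPreimage c).card := by
  rw [card_castSuccPreimage, erase_eq_of_notMem (hQ.notMem_of_mem_erase hB hlast hc)]
  exact hQ2 c (mem_of_mem_erase hc)

lemma IsSetPartition.singletonPoints_splitLastBlock (hQ : IsSetPartition Q)
    (hQ2 : ∀ c ∈ Q, 2 ≤ c.card) (hB : B ∈ Q) (hlast : Fin.last n ∈ B) :
    singletonPoints (splitLastBlock Q) = castSuccPreimage B := by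
  ext x
  rw [mem_singletonPoints, hQ.splitLastBlock_eq hB hlast, mem_union, mem_image, mem_image]
  constructor
  · rintro (⟨y, hy, hxy⟩ | ⟨c, hc, hcx⟩)
    · rwa [← singleton_injective hxy]
    · have := hQ.two_le_card_castSuccPreimage hQ2 hB hlast hc
      rw [hcx, card_singleton] at this
      omega
  · exact fun hx ↦ Or.inl ⟨x, hx, rfl⟩

lemma IsSetPartition.filter_two_le_card_splitLastBlock (hQ : IsSetPartition Q)
    (hQ2 : ∀ c ∈ Q, 2 ≤ c.card) (hB : B ∈ Q) (hlast : Fin.last n ∈ B) :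
    (splitLastBlock Q).filter (2 ≤ ·.card) = (Q.erase B).image castSuccPreimage := by
  rw [hQ.splitLastBlock_eq hB hlast, filter_union, filter_image, filter_image,
    filter_true_of_mem fun c hc ↦ hQ.two_le_card_castSuccPreimage hQ2 hB hlast hc]
  simp

lemma IsSetPartition.singletonPoints_splitLastBlock_nonempty (hQ : IsSetPartition Q)
    (hQ2 : ∀ c ∈ Q, 2 ≤ c.card) : (singletonPoints (splitLastBlock Q)).Nonempty := by
  obtain ⟨B, hB, hlast⟩ := hQ.exists_mem (Fin.last n)
  rw [hQ.singletonPoints_splitLastBlock hQ2 hB hlast, ← card_pos, card_castSuccPreimage,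
    card_erase_of_mem hlast]
  have := hQ2 B hB
  omega

lemma IsSetPartition.mergeSingletons_splitLastBlock (hQ : IsSetPartition Q)
    (hQ2 : ∀ c ∈ Q, 2 ≤ c.card) : mergeSingletons (splitLastBlock Q) = Q := by
  obtain ⟨B, hB, hlast⟩ := hQ.exists_mem (Fin.last n)
  have hmap : Set.EqOn (map Fin.castSuccEmb ∘ castSuccPreimage) id
      (Q.erase B : Set (Finset (Fin (n + 1)))) := by
    intro c hc
    rw [Function.comp_apply, id, map_castSuccPreimage,
      erase_eq_of_notMem (hQ.notMem_of_mem_erase hB hlast hc)]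
  rw [mergeSingletons, hQ.singletonPoints_splitLastBlock hQ2 hB hlast,
    hQ.filter_two_le_card_splitLastBlock hQ2 hB hlast, map_castSuccPreimage, insert_erase hlast,
    image_image, image_congr hmap, image_id, insert_erase hB]

lemma IsSetPartition.splitLastBlock_mergeSingletons {P : Finset (Finset (Fin n))}
    (hP : IsSetPartition P) : splitLastBlock (mergeSingletons P) = P := by
  have hlast : Fin.last n ∈ insert (Fin.last n) ((singletonPoints P).map Fin.castSuccEmb) :=
    mem_insert_self _ _
  rw [(isSetPartition_mergeSingletons hP).splitLastBlock_eq (mem_insert_self _ _) hlast,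
    mergeSingletons, erase_insert fun h ↦ ?_]
  · simpa [image_image, Function.comp_def] using hP.image_singleton_union_filter
  · obtain ⟨b, -, hb⟩ := mem_image.1 h
    exact last_notMem_map_castSuccEmb b (hb ▸ hlast)

end SplitLastBlock

lemma bijOn_mergeSingletons (n : ℕ) :
    Set.BijOn mergeSingletons
      {P : Finset (Finset (Fin n)) | IsSetPartition P ∧ (singletonPoints P).Nonempty}
      {Q | IsSetPartition Q ∧ ∀ b ∈ Q, 2 ≤ b.card} :=
  Set.InvOn.bijOn
    ⟨fun _ hP ↦ hP.1.splitLastBlock_mergeSingletons,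
      fun _ hQ ↦ hQ.1.mergeSingletons_splitLastBlock hQ.2⟩
    (fun _ hP ↦ ⟨isSetPartition_mergeSingletons hP.1, two_le_card_of_mem_mergeSingletons hP.2⟩)
    (fun _ hQ ↦ ⟨isSetPartition_splitLastBlock hQ.1,
      hQ.1.singletonPoints_splitLastBlock_nonempty hQ.2⟩)

theorem bell_eq_bellT_add_bellT_succ_general (n : ℕ) :
    bell n = bellT n + bellT (n + 1) := by
  have hsplit : {P : Finset (Finset (Fin n)) | IsSetPartition P} \ {P | ∀ b ∈ P, 2 ≤ b.card} =
      {P | IsSetPartition P ∧ (singletonPoints P).Nonempty} :=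
    Set.ext fun _ ↦ and_congr_right fun hP ↦ hP.singletonPoints_nonempty_iff.symm
  rw [bell, bellT, Set.ofPred_and,
    ← Set.ncard_inter_add_ncard_sdiff_eq_ncard _ {P | ∀ b ∈ P, 2 ≤ b.card}, hsplit,
    (bijOn_mergeSingletons n).ncard_eq, bellT]

theorem bell_eq_bellT_add_bellT_succ (n : ℕ) (hn : 1 ≤ n) :
    bell n = bellT n + bellT (n + 1) :=
  bell_eq_bellT_add_bellT_succ_general n
end

section
/- The ratio of consecutive Bell numbers tends to infinity: lim_{n→∞} B_n / B_{n-1} = ∞. Equivalently, for every real c > 0 there exists N such that for all n ≥ N, B_n > c · B_{n-1}. -/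
/-!
Adding a new point to a partition `P` of `Fin ℓ`, either as a singleton or into one of its
`#P.parts` blocks, gives distinct partitions of `Fin (ℓ + 1)`, so
`B (ℓ + 1) ≥ ∑ P, (#P.parts + 1)`.
A partition with at most `m` blocks is the fibre partition of a map `Fin ℓ → Fin m`, so there
are at most `m ^ ℓ` of them, while the fibre partitions of maps from the last `ℓ - m²` points to
the first `m²` show `B ℓ ≥ (m²) ^ (ℓ - m²) ≥ 2 m ^ ℓ` for large `ℓ`. Hence at least half of all
partitions of `Fin ℓ` have more than `m` blocks, and `2 B (ℓ + 1) ≥ (m + 1) B ℓ`.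
-/

open Finset

namespace Finpartition

variable {α β γ : Type*} [Fintype α] [DecidableEq α]

open Classical in
noncomputable def ker (f : α → β) : Finpartition (univ : Finset α) :=
  ofSetoid (Setoid.ker f)

open Classical in
theorem mem_part_ker {f : α → β} {a b : α} : b ∈ (ker f).part a ↔ f a = f b :=
  mem_part_ofSetoid_iff_rel.trans Setoid.ker_def

theorem ext_part {P Q : Finpartition (univ : Finset α)} (h : ∀ a, P.part a = Q.part a) :
    P = Q := by
  ext t
  constructor
  · intro ht
    obtain ⟨a, -, rfl⟩ := P.part_surjOn ht
    simp [h a]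
  · intro ht
    obtain ⟨a, -, rfl⟩ := Q.part_surjOn ht
    simp [← h a]

theorem ker_eq_ker_iff {f : α → β} {g : α → γ} :
    ker f = ker g ↔ ∀ a b, f a = f b ↔ g a = g b := by
  refine ⟨fun h a b => ?_, fun h => ext_part fun a => ?_⟩
  · rw [← mem_part_ker, h, mem_part_ker]
  · ext b
    rw [mem_part_ker, mem_part_ker, h]

theorem ker_part (P : Finpartition (univ : Finset α)) : ker P.part = P :=
  ext_part fun a => by
    ext b
    rw [mem_part_ker, P.mem_part_iff_part_eq_part (mem_univ b) (mem_univ a), eq_comm]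

theorem card_le_card_of_surjective [Fintype β] [DecidableEq β] {g : β → α}
    (hg : Function.Surjective g) :
    Nat.card (Finpartition (univ : Finset α)) ≤ Nat.card (Finpartition (univ : Finset β)) := by
  refine Nat.card_le_card_of_injective (fun P => ker (P.part ∘ g)) fun P Q h => ?_
  rw [← ker_part P, ← ker_part Q, ker_eq_ker_iff]
  intro a b
  obtain ⟨a, rfl⟩ := hg a
  obtain ⟨b, rfl⟩ := hg b
  exact ker_eq_ker_iff.1 h a b

theorem card_congr [Fintype β] [DecidableEq β] (e : α ≃ β) :
    Nat.card (Finpartition (univ : Finset α)) = Nat.card (Finpartition (univ : Finset β)) :=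
  (card_le_card_of_surjective e.symm.surjective).antisymm
    (card_le_card_of_surjective e.surjective)

/-- A map `F : β → γ` is recovered from the partition of `γ ⊕ β` into the fibres of
`Sum.elim id F`, since `inr b` lies in the part of `inl (F b)`. -/
theorem pow_card_le_card_sum [Fintype β] [DecidableEq β] [Fintype γ] [DecidableEq γ] :
    Fintype.card γ ^ Fintype.card β ≤ Nat.card (Finpartition (univ : Finset (γ ⊕ β))) := by
  rw [← Fintype.card_fun, ← Nat.card_eq_fintype_card]
  refine Nat.card_le_card_of_injective (fun F : β → γ => ker (Sum.elim id F)) fun F G h => ?_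
  funext b
  simpa [eq_comm] using ker_eq_ker_iff.1 h (.inr b) (.inl (F b))

theorem card_filter_card_parts_le_le_pow (k : ℕ) :
    #{P : Finpartition (univ : Finset α) | #P.parts ≤ k} ≤ k ^ Fintype.card α := by
  calc #{P : Finpartition (univ : Finset α) | #P.parts ≤ k}
      ≤ #((univ : Finset (α → Fin k)).image ker) := card_le_card fun P hP => ?_
    _ ≤ k ^ Fintype.card α := card_image_le.trans (by simp)
  obtain ⟨e⟩ : Nonempty (P.parts ↪ Fin k) :=
    Function.Embedding.nonempty_of_card_le (by simpa using (mem_filter.1 hP).2)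
  refine mem_image.2 ⟨fun a => e ⟨P.part a, P.part_mem.2 (mem_univ a)⟩, mem_univ _, ?_⟩
  conv_rhs => rw [← ker_part P]
  exact ker_eq_ker_iff.2 fun a b => by simp [e.injective.eq_iff]

theorem succ_mul_sub_pow_le_sum_card_parts (k : ℕ) :
    (k + 1) * (Nat.card (Finpartition (univ : Finset α)) - k ^ Fintype.card α) ≤
      ∑ P : Finpartition (univ : Finset α), #P.parts := by
  have hsplit := card_filter_add_card_filter_not
    (s := (univ : Finset (Finpartition (univ : Finset α)))) (fun P => #P.parts ≤ k)
  have hfew := card_filter_card_parts_le_le_pow (α := α) k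
  rw [card_univ, ← Nat.card_eq_fintype_card] at hsplit
  calc (k + 1) * (Nat.card (Finpartition (univ : Finset α)) - k ^ Fintype.card α)
      ≤ #{P : Finpartition (univ : Finset α) | ¬ #P.parts ≤ k} * (k + 1) := by
        rw [mul_comm]; gcongr; omega
    _ ≤ ∑ P ∈ {P : Finpartition (univ : Finset α) | ¬ #P.parts ≤ k}, #P.parts :=
        (smul_eq_mul _ _).symm.trans_le <|
          card_nsmul_le_sum _ _ _ fun P hP => Nat.lt_of_not_le (mem_filter.1 hP).2
    _ ≤ ∑ P : Finpartition (univ : Finset α), #P.parts :=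
        sum_le_sum_of_subset (filter_subset _ _)

/-- The partition of `Option α` obtained from `P` by adding `none` as a new singleton part
(`o = none`) or by adding `none` to the part `t` (`o = some t`). -/
noncomputable def extendNone (P : Finpartition (univ : Finset α)) (o : Option (Finset α)) :
    Finpartition (univ : Finset (Option α)) :=
  ker fun x : Option α => x.elim o (some ∘ P.part)

theorem extendNone_injective {P Q : Finpartition (univ : Finset α)} {o o' : Option (Finset α)}
    (ho : o ∈ P.parts.insertNone) (ho' : o' ∈ Q.parts.insertNone)
    (h : P.extendNone o = Q.extendNone o') : P = Q ∧ o = o' := by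
  have key := ker_eq_ker_iff.1 h
  have hPQ : P = Q := by
    rw [← ker_part P, ← ker_part Q, ker_eq_ker_iff]
    intro a b
    simpa using key (some a) (some b)
  subst hPQ
  refine ⟨rfl, ?_⟩
  have hnone (a : α) : o = some (P.part a) ↔ o' = some (P.part a) := by
    simpa using key none (some a)
  rcases o with _ | t <;> rcases o' with _ | t'
  · rfl
  · obtain ⟨a, ha⟩ := P.nonempty_of_mem_parts (some_mem_insertNone.1 ho')
    simpa [P.part_eq_of_mem (some_mem_insertNone.1 ho') ha] using hnone a
  · obtain ⟨a, ha⟩ := P.nonempty_of_mem_parts (some_mem_insertNone.1 ho)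
    simpa [P.part_eq_of_mem (some_mem_insertNone.1 ho) ha] using hnone a
  · obtain ⟨a, ha⟩ := P.nonempty_of_mem_parts (some_mem_insertNone.1 ho)
    simpa [P.part_eq_of_mem (some_mem_insertNone.1 ho) ha, eq_comm] using hnone a

theorem sum_card_parts_add_one_le_card_option :
    ∑ P : Finpartition (univ : Finset α), (#P.parts + 1) ≤
      Nat.card (Finpartition (univ : Finset (Option α))) := by
  rw [Nat.card_eq_fintype_card, ← card_univ]
  simp_rw [← card_insertNone, ← card_sigma]
  refine card_le_card_of_injOn (fun x => x.1.extendNone x.2) (fun _ _ => mem_univ _) ?_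
  rintro ⟨P, o⟩ hPo ⟨Q, o'⟩ hQo' h
  obtain ⟨rfl, rfl⟩ := extendNone_injective (mem_sigma.1 hPo).2 (mem_sigma.1 hQo').2 h
  rfl

end Finpartition

theorem bell_eq_card_finpartition (n : ℕ) :
    bell n = Nat.card (Finpartition (univ : Finset (Fin n))) := by
  rw [bell, ← Set.ncard_range_of_injective fun _ _ => Finpartition.ext]
  congr 1
  ext P
  refine ⟨fun hP => ⟨⟨P, supIndep_iff_pairwiseDisjoint.2 fun b hb c hc => hP.2.1 b hb c hc,
    hP.2.2, fun h => not_nonempty_empty (hP.1 _ h)⟩, rfl⟩, ?_⟩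
  rintro ⟨Q, rfl⟩
  exact ⟨fun _ => Q.nonempty_of_mem_parts, fun _ hb _ hc => Q.disjoint hb hc, Q.sup_parts⟩

theorem pow_sub_le_bell {t ℓ : ℕ} (h : t ≤ ℓ) : t ^ (ℓ - t) ≤ bell ℓ := by
  rw [bell_eq_card_finpartition,
    Finpartition.card_congr ((finCongr (Nat.add_sub_cancel' h).symm).trans finSumFinEquiv.symm)]
  simpa using Finpartition.pow_card_le_card_sum (β := Fin (ℓ - t)) (γ := Fin t)

theorem succ_mul_sub_pow_le_bell_succ (k ℓ : ℕ) : (k + 1) * (bell ℓ - k ^ ℓ) ≤ bell (ℓ + 1) := by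
  rw [bell_eq_card_finpartition, bell_eq_card_finpartition,
    Finpartition.card_congr (finSuccEquiv ℓ)]
  calc (k + 1) * (Nat.card (Finpartition (univ : Finset (Fin ℓ))) - k ^ ℓ)
      ≤ ∑ P : Finpartition (univ : Finset (Fin ℓ)), #P.parts := by
        simpa using Finpartition.succ_mul_sub_pow_le_sum_card_parts (α := Fin ℓ) k
    _ ≤ ∑ P : Finpartition (univ : Finset (Fin ℓ)), (#P.parts + 1) :=
        sum_le_sum fun _ _ => Nat.le_succ _
    _ ≤ _ := Finpartition.sum_card_parts_add_one_le_card_option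

theorem two_mul_pow_le_bell {m ℓ : ℕ} (hm : 2 ≤ m) (hℓ : 2 * m ^ 2 + 1 ≤ ℓ) :
    2 * m ^ ℓ ≤ bell ℓ :=
  calc 2 * m ^ ℓ ≤ m * m ^ ℓ := Nat.mul_le_mul_right _ hm
    _ = m ^ (ℓ + 1) := (pow_succ' m ℓ).symm
    _ ≤ m ^ (2 * (ℓ - m ^ 2)) := Nat.pow_le_pow_right (by omega) (by omega)
    _ = (m ^ 2) ^ (ℓ - m ^ 2) := pow_mul m 2 _
    _ ≤ bell ℓ := pow_sub_le_bell (by nlinarith)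

theorem succ_mul_bell_le_two_mul_bell_succ {m ℓ : ℕ} (hm : 2 ≤ m) (hℓ : 2 * m ^ 2 + 1 ≤ ℓ) :
    (m + 1) * bell ℓ ≤ 2 * bell (ℓ + 1) := by
  have hpow := two_mul_pow_le_bell hm hℓ
  have hsucc := succ_mul_sub_pow_le_bell_succ m ℓ
  obtain ⟨q, hq⟩ : ∃ q, bell ℓ = m ^ ℓ + q := ⟨bell ℓ - m ^ ℓ, by omega⟩
  rw [hq, Nat.add_sub_cancel_left] at hsucc
  nlinarith

theorem bell_ratio_tendsto_atTop :
    ∀ c : ℝ, 0 < c → ∃ N : ℕ, ∀ n ≥ N, (bell n : ℝ) > c * (bell (n - 1) : ℝ) := by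
  intro c _
  set m := 2 * ⌈c⌉₊ + 2
  refine ⟨2 * m ^ 2 + 2, fun n hn => ?_⟩
  obtain ⟨ℓ, rfl⟩ : ∃ ℓ, n = ℓ + 1 := ⟨n - 1, by omega⟩
  have hm : 2 ≤ m := by omega
  have hℓ : 2 * m ^ 2 + 1 ≤ ℓ := by omega
  have hpos : (0 : ℝ) < bell ℓ := by
    exact_mod_cast (Nat.mul_pos two_pos (pow_pos (by omega) ℓ)).trans_le (two_mul_pow_le_bell hm hℓ)
  have hratio : ((m : ℝ) + 1) * bell ℓ ≤ 2 * bell (ℓ + 1) := by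
    exact_mod_cast succ_mul_bell_le_two_mul_bell_succ hm hℓ
  have hcm : 2 * c < m + 1 := by
    have := Nat.le_ceil c
    push_cast [m]
    linarith
  rw [Nat.add_sub_cancel]
  nlinarith
end

section
/- Fix distinct elements a_1, ..., a_t, b of [n] with n ≥ t+3. The family H(a_1,...,a_t,b) = { P : {a_1}, ..., {a_t} ∈ P and {c} ∈ P for some c ∉ {a_1,...,a_t,b} } ∪ { Q(a_i,b) : 1 ≤ i ≤ t } is t-intersecting (any two members share at least t blocks), but there is no set T of t elements of [n] such that every member of H contains all singletons {x}, x ∈ T. -/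
/-- `Qpart x y` is the set partition with block `{x,y}` and all other blocks singletons. -/
def Qpart {n : ℕ} (x y : Fin n) : Finset (Finset (Fin n)) :=
  insert ({x, y} : Finset (Fin n))
    (Finset.image (fun j => ({j} : Finset (Fin n))) (Finset.univ \ {x, y}))

/-- The Hilton–Milner type family `H(a_1,…,a_t,b)`. -/
def HM {n t : ℕ} (a : Fin t → Fin n) (b : Fin n) : Set (Finset (Finset (Fin n))) :=
  {P | IsSetPartition P ∧ (∀ i, ({a i} : Finset (Fin n)) ∈ P) ∧
    ∃ c : Fin n, (∀ i, c ≠ a i) ∧ c ≠ b ∧ ({c} : Finset (Fin n)) ∈ P}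
  ∪ {P | ∃ i : Fin t, P = Qpart (a i) b}

lemma singleton_mem_Qpart {n : ℕ} {x y z : Fin n} (hxy : x ≠ y) :
    ({z} : Finset (Fin n)) ∈ Qpart x y ↔ z ≠ x ∧ z ≠ y := by
  unfold Qpart
  simp only [Finset.mem_insert, Finset.mem_image, Finset.mem_sdiff, Finset.mem_univ,
    true_and, Finset.mem_singleton]
  constructor
  · rintro (h | ⟨j, hj, hz⟩)
    · exfalso
      have hc : ({z} : Finset (Fin n)).card = ({x, y} : Finset (Fin n)).card := by rw [h]
      rw [Finset.card_singleton, Finset.card_insert_of_notMem (by simpa using hxy),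
        Finset.card_singleton] at hc
      omega
    · have hjz : j = z := by simpa using hz
      subst hjz
      tauto
  · rintro ⟨h1, h2⟩
    refine Or.inr ⟨z, ?_, rfl⟩
    tauto

lemma isSetPartition_Qpart {n : ℕ} {x y : Fin n} (hxy : x ≠ y) :
    IsSetPartition (Qpart x y) := by
  refine ⟨?_, ?_, ?_⟩
  · intro c hc
    rcases Finset.mem_insert.1 hc with h | h
    · subst h; exact ⟨x, by simp⟩
    · obtain ⟨j, _, rfl⟩ := Finset.mem_image.1 h
      exact ⟨j, by simp⟩
  · intro c hc d hd hcd
    rcases Finset.mem_insert.1 hc with h | h <;> rcases Finset.mem_insert.1 hd with h' | h'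
    · exact absurd (h.trans h'.symm) hcd
    · obtain ⟨j, hj, rfl⟩ := Finset.mem_image.1 h'
      subst h
      simp only [Finset.mem_sdiff, Finset.mem_univ, true_and] at hj
      exact Finset.disjoint_singleton_right.2 hj
    · obtain ⟨j, hj, rfl⟩ := Finset.mem_image.1 h
      subst h'
      simp only [Finset.mem_sdiff, Finset.mem_univ, true_and] at hj
      exact Finset.disjoint_singleton_left.2 hj
    · obtain ⟨j, hj, rfl⟩ := Finset.mem_image.1 h
      obtain ⟨k, hk, rfl⟩ := Finset.mem_image.1 h'
      refine Finset.disjoint_singleton_left.2 ?_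
      simp only [Finset.mem_singleton]
      intro hjk; subst hjk; exact hcd rfl
  · apply Finset.eq_univ_of_forall
    intro z
    rw [Finset.mem_sup]
    by_cases hz : z = x ∨ z = y
    · exact ⟨{x, y}, Finset.mem_insert_self _ _, by simp [Finset.mem_insert]; tauto⟩
    · push_neg at hz
      refine ⟨{z}, Finset.mem_insert_of_mem (Finset.mem_image.2 ⟨z, ?_, rfl⟩), by simp⟩
      simp only [Finset.mem_sdiff, Finset.mem_univ, true_and, Finset.mem_insert,
        Finset.mem_singleton]
      tauto

theorem HM_intersecting_nontrivial (n t : ℕ) (ht : 0 < t) (hn : t + 3 ≤ n)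
    (a : Fin t → Fin n) (b : Fin n)
    (ha : Function.Injective a) (hab : ∀ i, a i ≠ b) :
    (∀ P ∈ HM a b, ∀ R ∈ HM a b, t ≤ (P ∩ R).card) ∧
      ¬ ∃ T : Finset (Fin n), T.card = t ∧
        ∀ P ∈ HM a b, ∀ x ∈ T, ({x} : Finset (Fin n)) ∈ P := by
  have hsing : Function.Injective (fun z : Fin n => ({z} : Finset (Fin n))) :=
    fun _ _ h => Finset.singleton_injective h
  constructor
  · rintro P (⟨hP1, hPa, c, hca, hcb, hcP⟩ | ⟨i, rfl⟩) R (⟨hR1, hRa, d, hda, hdb, hdP⟩ | ⟨j, rfl⟩)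
    · -- both first-type
      have hsub : Finset.image (fun i => ({a i} : Finset (Fin n))) Finset.univ ⊆ P ∩ R := by
        intro s hs
        obtain ⟨i, _, rfl⟩ := Finset.mem_image.1 hs
        exact Finset.mem_inter.2 ⟨hPa i, hRa i⟩
      calc t = (Finset.image (fun i => ({a i} : Finset (Fin n))) Finset.univ).card := by
              rw [Finset.card_image_of_injective _ (fun _ _ h => ha (Finset.singleton_injective h))]
              simp
        _ ≤ _ := Finset.card_le_card hsub
    · -- P first-type, R = Qpart (a j) b
      have hsub : insert ({c} : Finset (Fin n))
          (Finset.image (fun i => ({a i} : Finset (Fin n))) (Finset.univ \ {j}))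
          ⊆ P ∩ Qpart (a j) b := by
        intro s hs
        rcases Finset.mem_insert.1 hs with rfl | hs
        · exact Finset.mem_inter.2 ⟨hcP, (singleton_mem_Qpart (hab j)).2 ⟨hca j, hcb⟩⟩
        · obtain ⟨i, hi, rfl⟩ := Finset.mem_image.1 hs
          simp only [Finset.mem_sdiff, Finset.mem_univ, true_and, Finset.mem_singleton] at hi
          exact Finset.mem_inter.2 ⟨hPa i,
            (singleton_mem_Qpart (hab j)).2 ⟨fun h => hi (ha h), hab i⟩⟩
      have hcard : (insert ({c} : Finset (Fin n))
          (Finset.image (fun i => ({a i} : Finset (Fin n))) (Finset.univ \ {j}))).card = t := by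
        rw [Finset.card_insert_of_notMem, Finset.card_image_of_injective _
          (fun _ _ h => ha (Finset.singleton_injective h)), Finset.card_sdiff_of_subset (by simp)]
        · simp; omega
        · intro hmem
          obtain ⟨i, _, hi⟩ := Finset.mem_image.1 hmem
          exact hca i (Finset.singleton_injective hi).symm
      rw [← hcard]
      exact Finset.card_le_card hsub
    · -- P = Qpart (a i) b, R first-type
      have hsub : insert ({d} : Finset (Fin n))
          (Finset.image (fun k => ({a k} : Finset (Fin n))) (Finset.univ \ {i}))
          ⊆ Qpart (a i) b ∩ R := by
        intro s hs
        rcases Finset.mem_insert.1 hs with rfl | hs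
        · exact Finset.mem_inter.2 ⟨(singleton_mem_Qpart (hab i)).2 ⟨hda i, hdb⟩, hdP⟩
        · obtain ⟨k, hk, rfl⟩ := Finset.mem_image.1 hs
          simp only [Finset.mem_sdiff, Finset.mem_univ, true_and, Finset.mem_singleton] at hk
          exact Finset.mem_inter.2 ⟨(singleton_mem_Qpart (hab i)).2
            ⟨fun h => hk (ha h), hab k⟩, hRa k⟩
      have hcard : (insert ({d} : Finset (Fin n))
          (Finset.image (fun k => ({a k} : Finset (Fin n))) (Finset.univ \ {i}))).card = t := by
        rw [Finset.card_insert_of_notMem, Finset.card_image_of_injective _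
          (fun _ _ h => ha (Finset.singleton_injective h)), Finset.card_sdiff_of_subset (by simp)]
        · simp; omega
        · intro hmem
          obtain ⟨k, _, hk⟩ := Finset.mem_image.1 hmem
          exact hda k (Finset.singleton_injective hk).symm
      rw [← hcard]
      exact Finset.card_le_card hsub
    · -- both Qpart
      have hsub : Finset.image (fun z : Fin n => ({z} : Finset (Fin n)))
          (Finset.univ \ {a i, a j, b}) ⊆ Qpart (a i) b ∩ Qpart (a j) b := by
        intro s hs
        obtain ⟨z, hz, rfl⟩ := Finset.mem_image.1 hs
        simp only [Finset.mem_sdiff, Finset.mem_univ, true_and, Finset.mem_insert,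
          Finset.mem_singleton] at hz
        push_neg at hz
        exact Finset.mem_inter.2 ⟨(singleton_mem_Qpart (hab i)).2 ⟨hz.1, hz.2.2⟩,
          (singleton_mem_Qpart (hab j)).2 ⟨hz.2.1, hz.2.2⟩⟩
      have hcard : t ≤ (Finset.image (fun z : Fin n => ({z} : Finset (Fin n)))
          (Finset.univ \ {a i, a j, b})).card := by
        rw [Finset.card_image_of_injective _ hsing, Finset.card_sdiff_of_subset (Finset.subset_univ _)]
        have h3 : ({a i, a j, b} : Finset (Fin n)).card ≤ 3 := by
          apply le_trans (Finset.card_insert_le _ _)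
          have := Finset.card_insert_le (a j) ({b} : Finset (Fin n))
          simp at this ⊢
          omega
        simp only [Finset.card_univ, Fintype.card_fin]
        omega
      exact le_trans hcard (Finset.card_le_card hsub)
  · rintro ⟨T, hT, hTmem⟩
    -- every x ∈ T satisfies x ≠ a i for all i and x ≠ b
    have hQ : ∀ i : Fin t, Qpart (a i) b ∈ HM a b := fun i => Or.inr ⟨i, rfl⟩
    have hTprop : ∀ x ∈ T, (∀ i, x ≠ a i) ∧ x ≠ b := by
      intro x hx
      have h0 := (singleton_mem_Qpart (hab ⟨0, ht⟩)).1 (hTmem _ (hQ ⟨0, ht⟩) x hx)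
      refine ⟨fun i => ((singleton_mem_Qpart (hab i)).1 (hTmem _ (hQ i) x hx)).1, h0.2⟩
    obtain ⟨x0, hx0⟩ := Finset.card_pos.1 (hT ▸ ht)
    obtain ⟨hx0a, hx0b⟩ := hTprop x0 hx0
    -- pick c outside range a ∪ {b, x0}
    have hc : (Finset.univ \ insert b (insert x0 (Finset.image a Finset.univ))).Nonempty := by
      rw [← Finset.card_pos, Finset.card_sdiff_of_subset (Finset.subset_univ _)]
      have h1 : (insert b (insert x0 (Finset.image a Finset.univ))).card ≤ t + 2 := by
        apply le_trans (Finset.card_insert_le _ _)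
        have h2 := Finset.card_insert_le x0 (Finset.image a Finset.univ)
        have h3 := Finset.card_image_le (f := a) (s := Finset.univ)
        simp only [Finset.card_univ, Fintype.card_fin] at h3
        omega
      simp only [Finset.card_univ, Fintype.card_fin]
      omega
    obtain ⟨c, hcmem⟩ := hc
    simp only [Finset.mem_sdiff, Finset.mem_univ, true_and, Finset.mem_insert,
      Finset.mem_image] at hcmem
    push_neg at hcmem
    obtain ⟨hcb, hcx0, hcnota⟩ := hcmem
    have hca : ∀ i, c ≠ a i := fun i h => hcnota i h.symm
    -- Qpart x0 b is in HM (first type)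
    have hmem : Qpart x0 b ∈ HM a b := by
      refine Or.inl ⟨isSetPartition_Qpart hx0b, fun i => ?_, c, hca, hcb, ?_⟩
      · exact (singleton_mem_Qpart hx0b).2 ⟨fun h => hx0a i h.symm, hab i⟩
      · exact (singleton_mem_Qpart hx0b).2 ⟨hcx0, hcb⟩
    have := (singleton_mem_Qpart hx0b).1 (hTmem _ hmem x0 hx0)
    exact this.1 rfl
end

section
/- Let A be a t-intersecting family of set partitions of [n], let i ≠ j in [n], and let A_{ij} = { P ∈ A : s_{ij}(P) ∉ A }. Then the family S_{ij}(A) = (A \ A_{ij}) ∪ s_{ij}(A_{ij}) is t-intersecting and |S_{ij}(A)| = |A|. -/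
/-- The `(i,j)`-split of a set partition `P`. -/
noncomputable def splitP {n : ℕ} (i j : Fin n) (P : Finset (Finset (Fin n))) :
    Finset (Finset (Fin n)) :=
  if h : ∃ B, B ∈ P ∧ i ∈ B ∧ j ∈ B then
    (P \ {h.choose}) ∪ {{i}, h.choose \ {i}}
  else P

/-- The `(i,j)`-splitting of a family of set partitions. -/
noncomputable def splitFam {n : ℕ} (i j : Fin n)
    (A : Set (Finset (Finset (Fin n)))) : Set (Finset (Finset (Fin n))) :=
  (A \ {P ∈ A | splitP i j P ∉ A}) ∪ (splitP i j '' {P ∈ A | splitP i j P ∉ A})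

/-- A family is `t`-intersecting if any two members share at least `t` blocks. -/
def TInter {n : ℕ} (t : ℕ) (A : Set (Finset (Finset (Fin n)))) : Prop :=
  ∀ P ∈ A, ∀ Q ∈ A, t ≤ (P ∩ Q).card

/-!
Splitting `P` along its block `B ∋ i, j` removes `B` and adds the two pieces `{i}` and `B \ {i}`,
neither of which can be a block of a partition in which `i` and `j` lie together. So two split
partitions still share every common block other than `B`, plus `{i}` when `B` was common; a split
and an unsplit member `Q` share as many blocks as `P` and `Q` did, unless `B ∈ Q`, and then as many
as `P` and the split of `Q`. Since `P` is recovered from its split and `B`, splitting is injective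
on the partitions it moves, which gives the cardinality.
-/

open Finset

theorem Set.encard_compression {α : Type*} (f : α → α) (A : Set α)
    (hf : InjOn f {x ∈ A | f x ∉ A}) :
    (A \ {x ∈ A | f x ∉ A} ∪ f '' {x ∈ A | f x ∉ A}).encard = A.encard := by
  have hdisj : Disjoint (A \ {x ∈ A | f x ∉ A}) (f '' {x ∈ A | f x ∉ A}) := by
    rw [Set.disjoint_right]
    rintro _ ⟨x, hx, rfl⟩ hfx
    exact hx.2 hfx.1
  rw [encard_union_eq hdisj, hf.encard_image,
    encard_sdiff_add_encard_of_subset (sep_subset _ _)]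

variable {n : ℕ} {i j : Fin n} {P Q : Finset (Finset (Fin n))} {B C : Finset (Fin n)}

theorem IsSetPartition.eq_of_mem_of_mem_s11 (hP : IsSetPartition P) (hB : B ∈ P) (hC : C ∈ P)
    {x : Fin n} (hxB : x ∈ B) (hxC : x ∈ C) : B = C := by
  by_contra h
  exact disjoint_left.mp (hP.2.1 B hB C hC h) hxB hxC

def splitBlocks (i : Fin n) (B : Finset (Fin n)) : Finset (Finset (Fin n)) :=
  {{i}, B.erase i}

@[simp]
theorem mem_splitBlocks : C ∈ splitBlocks i B ↔ C = {i} ∨ C = B.erase i := by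
  simp [splitBlocks]

theorem IsSetPartition.disjoint_splitBlocks (hij : i ≠ j) (hP : IsSetPartition P) (hB : B ∈ P)
    (hi : i ∈ B) (hj : j ∈ B) : Disjoint (splitBlocks i B) P := by
  rw [disjoint_left]
  intro C hC hCP
  rcases mem_splitBlocks.1 hC with rfl | rfl
  · have := hP.eq_of_mem_of_mem_s11 hCP hB (mem_singleton_self i) hi
    exact hij (mem_singleton.1 (this ▸ hj)).symm
  · have := hP.eq_of_mem_of_mem_s11 hCP hB (mem_erase.2 ⟨hij.symm, hj⟩) hj
    exact notMem_erase i B (by rwa [this])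

theorem splitP_eq (hP : IsSetPartition P) (hB : B ∈ P) (hi : i ∈ B) (hj : j ∈ B) :
    splitP i j P = P.erase B ∪ splitBlocks i B := by
  have h : ∃ C, C ∈ P ∧ i ∈ C ∧ j ∈ C := ⟨B, hB, hi, hj⟩
  rw [splitP, dif_pos h, hP.eq_of_mem_of_mem_s11 h.choose_spec.1 hB h.choose_spec.2.1 hi,
    sdiff_singleton_eq_erase, sdiff_singleton_eq_erase]
  rfl

theorem exists_block_of_splitP_notMem {A : Set (Finset (Finset (Fin n)))} (hP : P ∈ A)
    (h : splitP i j P ∉ A) : ∃ B ∈ P, i ∈ B ∧ j ∈ B := by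
  by_contra hc
  rw [splitP, dif_neg hc] at h
  exact h hP

section SplitBlock

variable (hP : IsSetPartition P) (hB : B ∈ P) (hi : i ∈ B) (hj : j ∈ B)
include hP hB hi hj

theorem erase_subset_splitP : P.erase B ⊆ splitP i j P :=
  splitP_eq hP hB hi hj ▸ subset_union_left

theorem splitBlocks_subset_splitP : splitBlocks i B ⊆ splitP i j P :=
  splitP_eq hP hB hi hj ▸ subset_union_right

theorem eq_insert_splitP_sdiff (hij : i ≠ j) :
    P = insert B (splitP i j P \ splitBlocks i B) := by
  rw [splitP_eq hP hB hi hj,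
    union_sdiff_cancel_right (disjoint_of_subset_left (erase_subset B P)
      (hP.disjoint_splitBlocks hij hB hi hj).symm),
    insert_erase hB]

theorem splitP_inter_of_mem (hij : i ≠ j) (hQ : IsSetPartition Q) (hBQ : B ∈ Q) :
    splitP i j P ∩ Q = (P ∩ Q).erase B := by
  rw [splitP_eq hP hB hi hj, union_inter_distrib_right,
    disjoint_iff_inter_eq_empty.1 (hQ.disjoint_splitBlocks hij hBQ hi hj),
    union_empty, erase_inter]

theorem min_card_inter_le_card_splitP_inter (hij : i ≠ j) (hQ : IsSetPartition Q) :
    min #(P ∩ Q) #(P ∩ splitP i j Q) ≤ #(splitP i j P ∩ Q) := by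
  by_cases hBQ : B ∈ Q
  · have h : P ∩ splitP i j Q = splitP i j P ∩ Q := by
      rw [inter_comm, splitP_inter_of_mem hQ hBQ hi hj hij hP hB,
        splitP_inter_of_mem hP hB hi hj hij hQ hBQ, inter_comm]
    exact h ▸ min_le_right _ _
  · refine (min_le_left _ _).trans (card_le_card fun C hC => ?_)
    obtain ⟨hCP, hCQ⟩ := mem_inter.1 hC
    have hCB : C ≠ B := by rintro rfl; exact hBQ hCQ
    exact mem_inter.2 ⟨erase_subset_splitP hP hB hi hj (mem_erase.2 ⟨hCB, hCP⟩), hCQ⟩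

theorem card_inter_le_card_splitP_inter_splitP (hij : i ≠ j) (hQ : IsSetPartition Q)
    (hC : C ∈ Q) (hiC : i ∈ C) (hjC : j ∈ C) :
    #(P ∩ Q) ≤ #(splitP i j P ∩ splitP i j Q) := by
  obtain rfl | hBC := eq_or_ne B C
  · have hiP : {i} ∉ P :=
      disjoint_left.1 (hP.disjoint_splitBlocks hij hB hi hj) (by simp)
    have hsub : insert {i} ((P ∩ Q).erase B) ⊆ splitP i j P ∩ splitP i j Q := by
      refine insert_subset_iff.2 ⟨?_, fun D hD => ?_⟩
      · exact mem_inter.2 ⟨splitBlocks_subset_splitP hP hB hi hj (by simp),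
          splitBlocks_subset_splitP hQ hC hiC hjC (by simp)⟩
      · obtain ⟨hDB, hDP, hDQ⟩ := mem_erase.1 hD |>.imp_right mem_inter.1
        exact mem_inter.2 ⟨erase_subset_splitP hP hB hi hj (mem_erase.2 ⟨hDB, hDP⟩),
          erase_subset_splitP hQ hC hiC hjC (mem_erase.2 ⟨hDB, hDQ⟩)⟩
    calc #(P ∩ Q) ≤ #((P ∩ Q).erase B) + 1 := by
          have := pred_card_le_card_erase (s := P ∩ Q) (a := B)
          omega
      _ = #(insert {i} ((P ∩ Q).erase B)) :=
          (card_insert_of_notMem fun h => hiP (mem_inter.1 (mem_of_mem_erase h)).1).symm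
      _ ≤ _ := card_le_card hsub
  · refine card_le_card fun D hD => ?_
    obtain ⟨hDP, hDQ⟩ := mem_inter.1 hD
    have hDB : D ≠ B := by rintro rfl; exact hBC (hQ.eq_of_mem_of_mem_s11 hDQ hC hj hjC)
    have hDC : D ≠ C := by rintro rfl; exact hBC (hP.eq_of_mem_of_mem_s11 hB hDP hi hiC)
    exact mem_inter.2 ⟨erase_subset_splitP hP hB hi hj (mem_erase.2 ⟨hDB, hDP⟩),
      erase_subset_splitP hQ hC hiC hjC (mem_erase.2 ⟨hDC, hDQ⟩)⟩

end SplitBlock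

theorem splitP_injOn (hij : i ≠ j) :
    Set.InjOn (splitP i j) {P | IsSetPartition P ∧ ∃ B ∈ P, i ∈ B ∧ j ∈ B} := by
  rintro P ⟨hP, B, hB, hi, hj⟩ Q ⟨hQ, C, hC, hiC, hjC⟩ hPQ
  have hBC : B = C := by
    have hmem : B.erase i ∈ splitP i j Q := hPQ ▸ splitBlocks_subset_splitP hP hB hi hj (by simp)
    rw [splitP_eq hQ hC hiC hjC, mem_union, mem_erase, mem_splitBlocks] at hmem
    have hjB : j ∈ B.erase i := mem_erase.2 ⟨hij.symm, hj⟩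
    rcases hmem with ⟨hne, hmemQ⟩ | h | h
    · exact absurd (hQ.eq_of_mem_of_mem_s11 hmemQ hC hjB hjC) hne
    · rw [h] at hjB
      exact absurd (mem_singleton.1 hjB) hij.symm
    · rw [← insert_erase hi, h, insert_erase hiC]
  subst hBC
  calc P = insert B (splitP i j P \ splitBlocks i B) := eq_insert_splitP_sdiff hP hB hi hj hij
    _ = insert B (splitP i j Q \ splitBlocks i B) := by rw [hPQ]
    _ = Q := (eq_insert_splitP_sdiff hQ hC hiC hjC hij).symm

theorem mem_splitFam {A : Set (Finset (Finset (Fin n)))} {R : Finset (Finset (Fin n))} :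
    R ∈ splitFam i j A ↔
      R ∈ A ∧ splitP i j R ∈ A ∨ ∃ P ∈ A, splitP i j P ∉ A ∧ splitP i j P = R := by
  simp [splitFam, and_assoc]

theorem TInter.splitFam {t : ℕ} {A : Set (Finset (Finset (Fin n)))} (hij : i ≠ j)
    (hpart : ∀ P ∈ A, IsSetPartition P) (hA : TInter t A) : TInter t (splitFam i j A) := by
  intro R hR S hS
  rcases mem_splitFam.1 hR with ⟨hRA, hσR⟩ | ⟨P, hPA, hσP, rfl⟩ <;>
    rcases mem_splitFam.1 hS with ⟨hSA, hσS⟩ | ⟨Q, hQA, hσQ, rfl⟩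
  · exact hA R hRA S hSA
  · obtain ⟨C, hC, hiC, hjC⟩ := exists_block_of_splitP_notMem hQA hσQ
    rw [inter_comm]
    exact (le_min (hA Q hQA R hRA) (hA Q hQA _ hσR)).trans
      (min_card_inter_le_card_splitP_inter (hpart Q hQA) hC hiC hjC hij (hpart R hRA))
  · obtain ⟨B, hB, hi, hj⟩ := exists_block_of_splitP_notMem hPA hσP
    exact (le_min (hA P hPA S hSA) (hA P hPA _ hσS)).trans
      (min_card_inter_le_card_splitP_inter (hpart P hPA) hB hi hj hij (hpart S hSA))
  · obtain ⟨B, hB, hi, hj⟩ := exists_block_of_splitP_notMem hPA hσP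
    obtain ⟨C, hC, hiC, hjC⟩ := exists_block_of_splitP_notMem hQA hσQ
    exact (hA P hPA Q hQA).trans (card_inter_le_card_splitP_inter_splitP (hpart P hPA) hB hi hj
      hij (hpart Q hQA) hC hiC hjC)

theorem splitFam_tInter_card {n t : ℕ} (i j : Fin n) (hij : i ≠ j)
    (A : Set (Finset (Finset (Fin n))))
    (hpart : ∀ P ∈ A, IsSetPartition P) (hA : TInter t A) :
    TInter t (splitFam i j A) ∧ (splitFam i j A).ncard = A.ncard := by
  have hinj : Set.InjOn (splitP i j) {P ∈ A | splitP i j P ∉ A} :=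
    (splitP_injOn hij).mono fun P hP =>
      show IsSetPartition P ∧ _ from ⟨hpart P hP.1, exists_block_of_splitP_notMem hP.1 hP.2⟩
  exact ⟨hA.splitFam hij hpart, congrArg ENat.toNat (Set.encard_compression _ A hinj)⟩
end

section
/- Let A be a t-intersecting family of set partitions of [n] that is compressed, i.e. S_{ij}(A) = A for all i ≠ j in [n]. For a set partition P let σ(P) = { x ∈ [n] : {x} ∈ P } be the union of its singleton blocks. Then σ(A) = { σ(P) : P ∈ A } is a t-intersecting family of subsets of [n]: any two members of σ(A) have at least t common elements. -/
theorem sigma_tInter_of_compressed {n t : ℕ}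
    (A : Set (Finset (Finset (Fin n))))
    (hpart : ∀ P ∈ A, IsSetPartition P) (hA : TInter t A)
    (hcomp : ∀ i j : Fin n, i ≠ j → splitFam i j A = A) :
    ∀ P ∈ A, ∀ R ∈ A,
      t ≤ ((Finset.univ.filter fun x : Fin n => ({x} : Finset (Fin n)) ∈ P) ∩
           (Finset.univ.filter fun x : Fin n => ({x} : Finset (Fin n)) ∈ R)).card := by
  -- compressedness implies closure under splits
  have hclose : ∀ i j : Fin n, i ≠ j → ∀ P ∈ A, splitP i j P ∈ A := by
    intro i j hij P hP
    by_contra h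
    have h1 : splitP i j P ∈ splitFam i j A := Or.inr ⟨P, ⟨hP, h⟩, rfl⟩
    rw [hcomp i j hij] at h1
    exact h h1
  intro P₀ hP₀ R hR
  suffices H : ∀ k, ∀ P, P ∈ A → ((P ∩ R).filter fun b => 2 ≤ b.card).card = k →
      t ≤ ((Finset.univ.filter fun x : Fin n => ({x} : Finset (Fin n)) ∈ P) ∩
           (Finset.univ.filter fun x : Fin n => ({x} : Finset (Fin n)) ∈ R)).card by
    exact H _ P₀ hP₀ rfl
  intro k
  induction k with
  | zero =>
    intro P hP hm
    have hsub : P ∩ R ⊆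
        ((Finset.univ.filter fun x : Fin n => ({x} : Finset (Fin n)) ∈ P) ∩
         (Finset.univ.filter fun x : Fin n => ({x} : Finset (Fin n)) ∈ R)).image
          (fun x => ({x} : Finset (Fin n))) := by
      intro b hb
      have hbP : b ∈ P := (Finset.mem_inter.mp hb).1
      have hbR : b ∈ R := (Finset.mem_inter.mp hb).2
      have h1 : b.card = 1 := by
        have hne := Finset.card_pos.mpr ((hpart P hP).1 b hbP)
        have h2 : ¬ 2 ≤ b.card := by
          intro h2
          have hmem : b ∈ (P ∩ R).filter fun b => 2 ≤ b.card :=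
            Finset.mem_filter.mpr ⟨hb, h2⟩
          rw [Finset.card_eq_zero] at hm
          simp [hm] at hmem
        omega
      obtain ⟨x, rfl⟩ := Finset.card_eq_one.mp h1
      exact Finset.mem_image.mpr ⟨x, by simp [hbP, hbR], rfl⟩
    calc t ≤ (P ∩ R).card := hA P hP R hR
      _ ≤ _ := Finset.card_le_card hsub
      _ ≤ _ := Finset.card_image_le
  | succ k ih =>
    intro P hP hm
    have hfne : ((P ∩ R).filter fun b => 2 ≤ b.card).Nonempty := by
      rw [← Finset.card_pos, hm]; omega
    obtain ⟨B, hBf⟩ := hfne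
    have hBm := Finset.mem_filter.mp hBf
    have hBP : B ∈ P := (Finset.mem_inter.mp hBm.1).1
    have hBR : B ∈ R := (Finset.mem_inter.mp hBm.1).2
    have hB2 : 2 ≤ B.card := hBm.2
    obtain ⟨i, hi, j, hj, hij⟩ := Finset.one_lt_card.mp (by omega : 1 < B.card)
    have hex : ∃ C, C ∈ P ∧ i ∈ C ∧ j ∈ C := ⟨B, hBP, hi, hj⟩
    have hsplit : splitP i j P = (P \ {B}) ∪ {{i}, B \ {i}} := by
      rw [splitP, dif_pos hex]
      have hCB : hex.choose = B := by
        by_contra hne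
        have hd := (hpart P hP).2.1 _ hex.choose_spec.1 B hBP hne
        exact (Finset.disjoint_left.mp hd hex.choose_spec.2.1) hi
      rw [hCB]
    have hsingR : ∀ x ∈ B, ({x} : Finset (Fin n)) ∉ R := by
      intro x hx hxR
      have hne : ({x} : Finset (Fin n)) ≠ B := by
        intro h
        rw [← h] at hB2
        simp at hB2
      have hd := (hpart R hR).2.1 _ hxR B hBR hne
      exact Finset.disjoint_left.mp hd (Finset.mem_singleton_self x) hx
    have hBiR : B \ {i} ∉ R := by
      intro hmem
      have hne : B \ {i} ≠ B := by
        intro h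
        have hii : i ∈ B \ {i} := h.symm ▸ hi
        simp at hii
      have hd := (hpart R hR).2.1 _ hmem B hBR hne
      exact Finset.disjoint_left.mp hd
        (Finset.mem_sdiff.mpr ⟨hj, by simp [Ne.symm hij]⟩) hj
    set P1 : Finset (Finset (Fin n)) := (P \ {B}) ∪ {{i}, B \ {i}} with hP1def
    have hP1A : P1 ∈ A := hsplit ▸ hclose i j hij P hP
    have hinter : P1 ∩ R = (P ∩ R).erase B := by
      ext b
      simp only [hP1def, Finset.mem_inter, Finset.mem_union, Finset.mem_sdiff,
        Finset.mem_singleton, Finset.mem_insert, Finset.mem_erase]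
      constructor
      · rintro ⟨hb1 | hb1, hbR⟩
        · exact ⟨hb1.2, hb1.1, hbR⟩
        · rcases hb1 with rfl | rfl
          · exact absurd hbR (hsingR i hi)
          · exact absurd hbR hBiR
      · rintro ⟨hne, hbP, hbR⟩
        exact ⟨Or.inl ⟨hbP, hne⟩, hbR⟩
    have hm1 : ((P1 ∩ R).filter fun b => 2 ≤ b.card).card = k := by
      rw [hinter, Finset.filter_erase, Finset.card_erase_of_mem hBf, hm]
      omega
    have hsig : ((Finset.univ.filter fun x : Fin n => ({x} : Finset (Fin n)) ∈ P1) ∩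
         (Finset.univ.filter fun x : Fin n => ({x} : Finset (Fin n)) ∈ R)) =
        ((Finset.univ.filter fun x : Fin n => ({x} : Finset (Fin n)) ∈ P) ∩
         (Finset.univ.filter fun x : Fin n => ({x} : Finset (Fin n)) ∈ R)) := by
      ext x
      simp only [hP1def, Finset.mem_inter, Finset.mem_filter, Finset.mem_univ, true_and,
        Finset.mem_union, Finset.mem_sdiff, Finset.mem_singleton, Finset.mem_insert]
      constructor
      · rintro ⟨hx1 | hx1, hxR⟩
        · exact ⟨hx1.1, hxR⟩
        · rcases hx1 with h | h
          · exact absurd (h ▸ hxR) (hsingR i hi)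
          · exact absurd (h ▸ hxR) hBiR
      · rintro ⟨hxP, hxR⟩
        have hne : ({x} : Finset (Fin n)) ≠ B := by
          intro h
          rw [← h] at hB2
          simp at hB2
        exact ⟨Or.inl ⟨hxP, hne⟩, hxR⟩
    rw [← hsig]
    exact ih P1 hP1A hm1
end

section
/- Let t ≥ 1 and let F_1, F_2, F_3 be (t+1)-element subsets of [n] such that |F_a ∩ F_b| ≥ t for all a, b, and suppose F_1 ∩ F_2 ⊄ F_3 and F_1 ≠ F_2. Then F_1 Δ F_2 ⊆ F_3 and F_3 = (F_1 ∪ F_2) \ {x} for some x ∈ F_1 ∩ F_2. -/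
theorem three_sets_structure (n t : ℕ) (ht : 1 ≤ t)
    (F₁ F₂ F₃ : Finset (Fin n))
    (h₁ : F₁.card = t + 1) (h₂ : F₂.card = t + 1) (h₃ : F₃.card = t + 1)
    (h12 : t ≤ (F₁ ∩ F₂).card) (h13 : t ≤ (F₁ ∩ F₃).card)
    (h23 : t ≤ (F₂ ∩ F₃).card)
    (hne : F₁ ≠ F₂) (hnsub : ¬ F₁ ∩ F₂ ⊆ F₃) :
    symmDiff F₁ F₂ ⊆ F₃ ∧ ∃ x ∈ F₁ ∩ F₂, F₃ = (F₁ ∪ F₂) \ {x} := by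
  -- |F₁ ∩ F₂| = t
  have hcard12 : (F₁ ∩ F₂).card = t := by
    refine le_antisymm ?_ h12
    by_contra h
    push_neg at h
    have hle : (F₁ ∩ F₂).card ≤ t + 1 := h₁ ▸ Finset.card_le_card Finset.inter_subset_left
    have heq : F₁ ∩ F₂ = F₁ := Finset.eq_of_subset_of_card_le Finset.inter_subset_left
      (by omega)
    have : F₁ ⊆ F₂ := by rw [← heq]; exact Finset.inter_subset_right
    exact hne (Finset.eq_of_subset_of_card_le this (by omega))
  obtain ⟨x, hx, hxF₃⟩ := Finset.not_subset.mp hnsub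
  have hx1 : x ∈ F₁ := (Finset.mem_inter.mp hx).1
  have hx2 : x ∈ F₂ := (Finset.mem_inter.mp hx).2
  have key : ∀ F : Finset (Fin n), F.card = t + 1 → x ∈ F → t ≤ (F ∩ F₃).card →
      F.erase x ⊆ F₃ := by
    intro F hF hxF hFt
    have hsub : F ∩ F₃ ⊆ F.erase x := by
      intro y hy
      rw [Finset.mem_erase]
      exact ⟨fun h => hxF₃ (h ▸ (Finset.mem_inter.mp hy).2), (Finset.mem_inter.mp hy).1⟩
    have hce : (F.erase x).card = t := by rw [Finset.card_erase_of_mem hxF, hF]; omega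
    have : F ∩ F₃ = F.erase x :=
      Finset.eq_of_subset_of_card_le hsub (by omega)
    rw [← this]
    exact Finset.inter_subset_right
  have k1 := key F₁ h₁ hx1 h13
  have k2 := key F₂ h₂ hx2 h23
  have hsub3 : (F₁ ∪ F₂) \ {x} ⊆ F₃ := by
    intro y hy
    rw [Finset.mem_sdiff, Finset.mem_union, Finset.mem_singleton] at hy
    rcases hy.1 with h | h
    · exact k1 (Finset.mem_erase.mpr ⟨hy.2, h⟩)
    · exact k2 (Finset.mem_erase.mpr ⟨hy.2, h⟩)
  have hcu : (F₁ ∪ F₂).card = t + 2 := by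
    have := Finset.card_union_add_card_inter F₁ F₂
    omega
  have hcsd : ((F₁ ∪ F₂) \ {x}).card = t + 1 := by
    have : (F₁ ∪ F₂) \ {x} = (F₁ ∪ F₂).erase x := by
      ext y; simp [Finset.mem_sdiff, Finset.mem_erase, and_comm]
    rw [this, Finset.card_erase_of_mem (Finset.mem_union_left _ hx1), hcu]; omega
  have heq3 : F₃ = (F₁ ∪ F₂) \ {x} :=
    (Finset.eq_of_subset_of_card_le hsub3 (by omega)).symm
  refine ⟨?_, x, hx, heq3⟩
  intro y hy
  rw [Finset.mem_symmDiff] at hy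
  apply hsub3
  rw [Finset.mem_sdiff, Finset.mem_union, Finset.mem_singleton]
  rcases hy with ⟨h1, h2⟩ | ⟨h1, h2⟩
  · exact ⟨Or.inl h1, fun h => h2 (h ▸ hx2)⟩
  · exact ⟨Or.inr h1, fun h => h2 (h ▸ hx1)⟩
end
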